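/- Let (S, π₀, π₁, σ) be a summable pairing structure on a category C in which f ∘ 0 = 0 for all morphisms f. Then the following are equivalent: (1) (S, π₀, π₁, σ) is a left pre-summability structure and every morphism of C is additive; (2) S extends to a functor S : C → C (acting on a morphism f by S f := ⟨f ∘ π₀, f ∘ π₁⟩) such that π₀, π₁ and σ are natural transformations from S to the identity functor. -/
import Mathlib


open CategoryTheory CategoryTheory.Limits
open scoped Classical

universe v u

/-- A summable pairing structure on a category `C` whose hom-sets carry a
distinguished morphism `0` satisfying `0 ∘ f = 0`. -/
structure SummablePairing (C : Type u) [Category.{v} C] where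
  /-- the distinguished zero morphism of each hom-set -/
  zero : ∀ X Y : C, X ⟶ Y
  /-- `0 ∘ f = 0` -/
  comp_zero : ∀ {X Y Z : C} (f : X ⟶ Y), f ≫ zero Y Z = zero X Z
  /-- the map on objects -/
  D : C → C
  p0 : ∀ X : C, D X ⟶ X
  p1 : ∀ X : C, D X ⟶ X
  s : ∀ X : C, D X ⟶ X
  /-- `p0` and `p1` are jointly monic -/
  jointly_monic : ∀ {Y X : C} {f g : Y ⟶ D X},
    f ≫ p0 X = g ≫ p0 X → f ≫ p1 X = g ≫ p1 X → f = g

namespace SummablePairing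

variable {C : Type u} [Category.{v} C]

/-- `f0 ⊞ f1` : summability of two parallel morphisms. -/
def Summable (S : SummablePairing C) {X Y : C} (f0 f1 : X ⟶ Y) : Prop :=
  ∃ w : X ⟶ S.D Y, w ≫ S.p0 Y = f0 ∧ w ≫ S.p1 Y = f1

/-- the witness `⟨f0, f1⟩` of a summable pair (an arbitrary default otherwise) -/
noncomputable def wit (S : SummablePairing C) {X Y : C} (f0 f1 : X ⟶ Y) : X ⟶ S.D Y :=
  if h : S.Summable f0 f1 then h.choose else S.zero X (S.D Y)

/-- the sum `f0 + f1` of a summable pair -/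
noncomputable def add (S : SummablePairing C) {X Y : C} (f0 f1 : X ⟶ Y) : X ⟶ Y :=
  S.wit f0 f1 ≫ S.s Y

/-- additive morphisms -/
def Additive (S : SummablePairing C) {Y Z : C} (h : Y ⟶ Z) : Prop :=
  (∀ X : C, S.zero X Y ≫ h = S.zero X Z) ∧
  (∀ (X : C) (f0 f1 : X ⟶ Y), S.Summable f0 f1 →
    S.Summable (f0 ≫ h) (f1 ≫ h) ∧ S.add f0 f1 ≫ h = S.add (f0 ≫ h) (f1 ≫ h))

/-- a left pre-summability structure: `p0`, `p1` and `s` are additive -/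
def IsLeftPreSummability (S : SummablePairing C) : Prop :=
  (∀ X : C, S.Additive (S.p0 X)) ∧ (∀ X : C, S.Additive (S.p1 X)) ∧
  (∀ X : C, S.Additive (S.s X))

/-- axiom (D-com) -/
def Dcom (S : SummablePairing C) : Prop :=
  ∀ X : C, S.Summable (S.p1 X) (S.p0 X) ∧ S.add (S.p1 X) (S.p0 X) = S.s X

/-- axiom (D-zero) -/
def Dzero (S : SummablePairing C) : Prop :=
  ∀ X : C, S.Summable (𝟙 X) (S.zero X X) ∧ S.Summable (S.zero X X) (𝟙 X) ∧
    S.add (𝟙 X) (S.zero X X) = 𝟙 X ∧ S.add (S.zero X X) (𝟙 X) = 𝟙 X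

/-- axiom (D-witness) -/
def Dwitness (S : SummablePairing C) : Prop :=
  ∀ (Y X : C) (f g : Y ⟶ S.D X),
    S.Summable (f ≫ S.s X) (g ≫ S.s X) → S.Summable f g

/-- a left summability structure -/
def IsLeftSummability (S : SummablePairing C) : Prop :=
  S.IsLeftPreSummability ∧ S.Dcom ∧ S.Dzero ∧ S.Dwitness

/-- `ι₀ = ⟨id, 0⟩` -/
noncomputable def iota0 (S : SummablePairing C) (X : C) : X ⟶ S.D X :=
  S.wit (𝟙 X) (S.zero X X)

/-- `θ = ⟨π₀ ∘ π₀, π₁ ∘ π₀ + π₀ ∘ π₁⟩` -/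
noncomputable def theta (S : SummablePairing C) (X : C) : S.D (S.D X) ⟶ S.D X :=
  S.wit (S.p0 (S.D X) ≫ S.p0 X)
    (S.add (S.p0 (S.D X) ≫ S.p1 X) (S.p1 (S.D X) ≫ S.p0 X))

/-- `l = ⟨⟨π₀, 0⟩, ⟨0, π₁⟩⟩` -/
noncomputable def lmor (S : SummablePairing C) (X : C) : S.D X ⟶ S.D (S.D X) :=
  S.wit (S.wit (S.p0 X) (S.zero (S.D X) X)) (S.wit (S.zero (S.D X) X) (S.p1 X))

/-- `c = ⟨⟨π₀ ∘ π₀, π₀ ∘ π₁⟩, ⟨π₁ ∘ π₀, π₁ ∘ π₁⟩⟩` -/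
noncomputable def cmor (S : SummablePairing C) (X : C) : S.D (S.D X) ⟶ S.D (S.D X) :=
  S.wit (S.wit (S.p0 (S.D X) ≫ S.p0 X) (S.p1 (S.D X) ≫ S.p0 X))
        (S.wit (S.p0 (S.D X) ≫ S.p1 X) (S.p1 (S.D X) ≫ S.p1 X))

end SummablePairing

/-- summability of a finite family of morphisms (represented as a multiset),
together with its sum, defined inductively -/
inductive SummablePairing.MSummable {C : Type u} [Category.{v} C] (S : SummablePairing C) :
    ∀ {X Y : C}, Multiset (X ⟶ Y) → (X ⟶ Y) → Prop
  | nil {X Y : C} : SummablePairing.MSummable S (0 : Multiset (X ⟶ Y)) (S.zero X Y)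
  | cons {X Y : C} {m : Multiset (X ⟶ Y)} {t f : X ⟶ Y} :
      SummablePairing.MSummable S m t → S.Summable t f →
      SummablePairing.MSummable S (f ::ₘ m) (S.add t f)

/-- the data making a left summability structure a pre-differential structure:
an operator `D` on morphisms with `π₀ ∘ D f = f ∘ π₀` -/
structure DiffOp {C : Type u} [Category.{v} C] (S : SummablePairing C) where
  map : ∀ {X Y : C}, (X ⟶ Y) → (S.D X ⟶ S.D Y)
  map_p0 : ∀ {X Y : C} (f : X ⟶ Y), map f ≫ S.p0 Y = S.p0 X ≫ f

namespace DiffOp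

variable {C : Type u} [Category.{v} C] {S : SummablePairing C}

/-- the differential `∂f = π₁ ∘ D f` -/
def dd (Dm : DiffOp S) {X Y : C} (f : X ⟶ Y) : S.D X ⟶ Y := Dm.map f ≫ S.p1 Y

/-- D-linear morphisms -/
def DLinear (Dm : DiffOp S) {X Y : C} (f : X ⟶ Y) : Prop :=
  Dm.map f ≫ S.p1 Y = S.p1 X ≫ f ∧ Dm.map f ≫ S.s Y = S.s X ≫ f ∧
  (∀ U : C, S.zero U X ≫ f = S.zero U Y)

/-- axiom (Dproj-lin) -/
def DprojLin (Dm : DiffOp S) : Prop :=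
  (∀ X : C, Dm.DLinear (S.p0 X)) ∧ (∀ X : C, Dm.DLinear (S.p1 X))

/-- axiom (Dsum-lin) -/
def DsumLin (Dm : DiffOp S) : Prop :=
  (∀ X : C, Dm.DLinear (S.s X)) ∧ (∀ X Y : C, Dm.DLinear (S.zero X Y))

/-- axiom (D-chain): functoriality -/
def Dchain (Dm : DiffOp S) : Prop :=
  (∀ X : C, Dm.map (𝟙 X) = 𝟙 (S.D X)) ∧
  (∀ (X Y Z : C) (f : X ⟶ Y) (g : Y ⟶ Z), Dm.map (f ≫ g) = Dm.map f ≫ Dm.map g)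

/-- axiom (D-add): naturality of `ι₀` and `θ` -/
def Dadd (Dm : DiffOp S) : Prop :=
  (∀ (X Y : C) (f : X ⟶ Y), S.iota0 X ≫ Dm.map f = f ≫ S.iota0 Y) ∧
  (∀ (X Y : C) (f : X ⟶ Y), S.theta X ≫ Dm.map f = Dm.map (Dm.map f) ≫ S.theta Y)

/-- axiom (D-lin): naturality of `l` -/
def Dlin (Dm : DiffOp S) : Prop :=
  ∀ (X Y : C) (f : X ⟶ Y), Dm.map f ≫ S.lmor Y = S.lmor X ≫ Dm.map (Dm.map f)

/-- axiom (D-Schwarz): naturality of `c` -/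
def Dschwarz (Dm : DiffOp S) : Prop :=
  ∀ (X Y : C) (f : X ⟶ Y),
    S.cmor X ≫ Dm.map (Dm.map f) = Dm.map (Dm.map f) ≫ S.cmor Y

end DiffOp

namespace SummablePairing

variable {C : Type u} [Category.{v} C] (S : SummablePairing C)

theorem wit_spec {X Y : C} {f0 f1 : X ⟶ Y} (h : S.Summable f0 f1) :
    S.wit f0 f1 ≫ S.p0 Y = f0 ∧ S.wit f0 f1 ≫ S.p1 Y = f1 := by
  rw [wit, dif_pos h]; exact h.choose_spec

theorem wit_unique {X Y : C} {f0 f1 : X ⟶ Y} {w : X ⟶ S.D Y}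
    (h0 : w ≫ S.p0 Y = f0) (h1 : w ≫ S.p1 Y = f1) : w = S.wit f0 f1 := by
  have hs : S.Summable f0 f1 := ⟨w, h0, h1⟩
  have := S.wit_spec hs
  exact S.jointly_monic (by rw [h0, this.1]) (by rw [h1, this.2])

theorem summable_p (X : C) : S.Summable (S.p0 X) (S.p1 X) :=
  ⟨𝟙 _, by simp, by simp⟩

theorem wit_p (X : C) : S.wit (S.p0 X) (S.p1 X) = 𝟙 (S.D X) :=
  (S.wit_unique (by simp) (by simp)).symm

theorem add_p (X : C) : S.add (S.p0 X) (S.p1 X) = S.s X := by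
  rw [add, wit_p, Category.id_comp]

end SummablePairing

/-- left pre-summability structures in which every morphism is additive
are exactly the pre-summability structures of Ehrhard (the action on morphisms being
`S f = ⟨f ∘ π₀, f ∘ π₁⟩`, functorial, with `π₀`, `π₁`, `σ` natural). -/
theorem stmt6 {C : Type u} [Category.{v} C] (S : SummablePairing C)
    (hz : ∀ (X Y Z : C) (f : Y ⟶ Z), S.zero X Y ≫ f = S.zero X Z) :
    (S.IsLeftPreSummability ∧ ∀ (X Y : C) (f : X ⟶ Y), S.Additive f) ↔
    ((∀ (X Y : C) (f : X ⟶ Y), S.Summable (S.p0 X ≫ f) (S.p1 X ≫ f)) ∧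
     (∀ X : C, S.wit (S.p0 X ≫ 𝟙 X) (S.p1 X ≫ 𝟙 X) = 𝟙 (S.D X)) ∧
     (∀ (X Y Z : C) (f : X ⟶ Y) (g : Y ⟶ Z),
        S.wit (S.p0 X ≫ (f ≫ g)) (S.p1 X ≫ (f ≫ g)) =
          S.wit (S.p0 X ≫ f) (S.p1 X ≫ f) ≫ S.wit (S.p0 Y ≫ g) (S.p1 Y ≫ g)) ∧
     (∀ (X Y : C) (f : X ⟶ Y),
        S.wit (S.p0 X ≫ f) (S.p1 X ≫ f) ≫ S.p0 Y = S.p0 X ≫ f) ∧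
     (∀ (X Y : C) (f : X ⟶ Y),
        S.wit (S.p0 X ≫ f) (S.p1 X ≫ f) ≫ S.p1 Y = S.p1 X ≫ f) ∧
     (∀ (X Y : C) (f : X ⟶ Y),
        S.wit (S.p0 X ≫ f) (S.p1 X ≫ f) ≫ S.s Y = S.s X ≫ f)) := by
  constructor
  · rintro ⟨-, hadd⟩
    have hsum : ∀ (X Y : C) (f : X ⟶ Y), S.Summable (S.p0 X ≫ f) (S.p1 X ≫ f) :=
      fun X Y f => ((hadd _ _ f).2 _ _ _ (S.summable_p X)).1
    refine ⟨hsum, ?_, ?_, fun X Y f => (S.wit_spec (hsum X Y f)).1,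
      fun X Y f => (S.wit_spec (hsum X Y f)).2, ?_⟩
    · intro X
      exact (S.wit_unique (by simp) (by simp)).symm
    · intro X Y Z f g
      have h1 := S.wit_spec (hsum X Y f)
      have h2 := S.wit_spec (hsum Y Z g)
      refine (S.wit_unique ?_ ?_).symm
      · rw [Category.assoc, h2.1, ← Category.assoc, h1.1, Category.assoc]
      · rw [Category.assoc, h2.2, ← Category.assoc, h1.2, Category.assoc]
    · intro X Y f
      have := ((hadd _ _ f).2 _ _ _ (S.summable_p X)).2
      rw [S.add_p] at this
      rw [this, SummablePairing.add]
  · rintro ⟨hsum, -, -, hp0, hp1, hs⟩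
    have key : ∀ (X Y : C) (f : X ⟶ Y), S.Additive f := by
      intro X Y f
      refine ⟨fun U => hz U X Y f, ?_⟩
      intro U f0 f1 hsm
      obtain ⟨w, hw0, hw1⟩ := hsm
      have hwu : w = S.wit f0 f1 := S.wit_unique hw0 hw1
      have hS0 := hp0 X Y f
      have hS1 := hp1 X Y f
      have hw' : (w ≫ S.wit (S.p0 X ≫ f) (S.p1 X ≫ f)) ≫ S.p0 Y = f0 ≫ f := by
        rw [Category.assoc, hS0, ← Category.assoc, hw0]
      have hw'' : (w ≫ S.wit (S.p0 X ≫ f) (S.p1 X ≫ f)) ≫ S.p1 Y = f1 ≫ f := by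
        rw [Category.assoc, hS1, ← Category.assoc, hw1]
      refine ⟨⟨_, hw', hw''⟩, ?_⟩
      rw [SummablePairing.add, SummablePairing.add, ← S.wit_unique hw' hw'',
        ← hwu, Category.assoc, Category.assoc, hs, ← Category.assoc]
    exact ⟨⟨fun X => key _ _ _, fun X => key _ _ _, fun X => key _ _ _⟩, key⟩
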